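/- The function Q(x) = x² + x·φ(x)/Φ(x) is strictly convex on (0, ∞); specifically Q''(x) = K(x)/Φ(x)³ with K(x) = 2Φ(x)³ + 2xφ(x)³ + x³Φ(x)²φ(x) + 3x²φ(x)²Φ(x) − 3xΦ(x)²φ(x) − 2φ(x)²Φ(x) > 0 for all x > 0. -/

import Mathlib

open MeasureTheory ProbabilityTheory Real

noncomputable def stdPDF (u : ℝ) : ℝ := (Real.sqrt (2 * Real.pi))⁻¹ * Real.exp (-u ^ 2 / 2)

noncomputable def stdCDF (u : ℝ) : ℝ := ∫ t in Set.Iic u, stdPDF t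

noncomputable def Q (x : ℝ) : ℝ := x ^ 2 + x * stdPDF x / stdCDF x

noncomputable def K (x : ℝ) : ℝ :=
  2 * (stdCDF x) ^ 3 + 2 * x * (stdPDF x) ^ 3 + x ^ 3 * (stdCDF x) ^ 2 * stdPDF x +
    3 * x ^ 2 * (stdPDF x) ^ 2 * stdCDF x - 3 * x * (stdCDF x) ^ 2 * stdPDF x -
    2 * (stdPDF x) ^ 2 * stdCDF x

/-!
With `r = φ/Φ`, the Riccati equation `r' = -x r - r²` turns `Q''` into a polynomial in `x`
and `r`, which is `K/Φ³`. For `x > 0` write `K = Φ G + 2xφ³ + x³Φ²φ` with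
`G = 2Φ² - 2φ² - 3xφΦ + 3x²φ²`; then `G > 0` follows from `Φ(x) ≥ 1/2 + xφ(x)`
(as `φ` decreases on `[0, x]`) and `φ ≤ 1/2`.
-/

open Set

theorem hasDerivAt_integral_Iic {E : Type*} [NormedAddCommGroup E] [NormedSpace ℝ E]
    [CompleteSpace E] {f : ℝ → E} (hf : ∀ a, IntegrableOn f (Iic a)) (hcont : Continuous f)
    (x : ℝ) : HasDerivAt (fun y => ∫ t in Iic y, f t) (f x) x := by
  have hsplit :
      (fun y => ∫ t in Iic y, f t) = fun y => (∫ t in Iic 0, f t) + ∫ t in (0)..y, f t := by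
    funext y
    rw [← intervalIntegral.integral_Iic_sub_Iic (hf 0) (hf y), add_sub_cancel]
  rw [hsplit]
  exact (intervalIntegral.integral_hasDerivAt_right (hcont.intervalIntegrable 0 x)
    (hcont.stronglyMeasurableAtFilter _ _) hcont.continuousAt).const_add _

theorem stdPDF_eq_gaussianPDFReal : stdPDF = gaussianPDFReal 0 1 := by
  funext u
  simp [stdPDF, gaussianPDFReal]

theorem stdPDF_pos (u : ℝ) : 0 < stdPDF u := by
  rw [stdPDF_eq_gaussianPDFReal]
  exact gaussianPDFReal_pos 0 1 u one_ne_zero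

theorem integrable_stdPDF : Integrable stdPDF := by
  rw [stdPDF_eq_gaussianPDFReal]
  exact integrable_gaussianPDFReal 0 1

theorem integral_stdPDF : ∫ u, stdPDF u = 1 := by
  rw [stdPDF_eq_gaussianPDFReal]
  exact integral_gaussianPDFReal_eq_one 0 one_ne_zero

theorem continuous_stdPDF : Continuous stdPDF := by
  unfold stdPDF
  fun_prop

theorem stdPDF_neg (u : ℝ) : stdPDF (-u) = stdPDF u := by
  simp [stdPDF]

theorem hasDerivAt_stdPDF (x : ℝ) : HasDerivAt stdPDF (-x * stdPDF x) x := by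
  have hexp : HasDerivAt (fun u : ℝ => -u ^ 2 / 2) (-x) x :=
    ((hasDerivAt_pow 2 x).neg.div_const 2).congr_deriv (by ring)
  exact (hexp.exp.const_mul (Real.sqrt (2 * Real.pi))⁻¹).congr_deriv (by rw [stdPDF]; ring)

theorem stdPDF_le_half (u : ℝ) : stdPDF u ≤ 1 / 2 := by
  have hsqrt : 2 ≤ Real.sqrt (2 * Real.pi) :=
    Real.le_sqrt_of_sq_le (by nlinarith [Real.pi_gt_three])
  calc stdPDF u ≤ (Real.sqrt (2 * Real.pi))⁻¹ :=
        mul_le_of_le_one_right (by positivity) (Real.exp_le_one_iff.2 (by nlinarith [sq_nonneg u]))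
    _ ≤ 1 / 2 := by rw [one_div]; exact inv_anti₀ two_pos hsqrt

theorem stdPDF_antitoneOn : AntitoneOn stdPDF (Ici 0) := by
  intro s hs t _ hst
  unfold stdPDF
  gcongr

theorem hasDerivAt_stdCDF (x : ℝ) : HasDerivAt stdCDF (stdPDF x) x :=
  hasDerivAt_integral_Iic (fun _ => integrable_stdPDF.integrableOn) continuous_stdPDF x

theorem stdCDF_pos (x : ℝ) : 0 < stdCDF x := by
  rw [stdCDF, setIntegral_pos_iff_support_of_nonneg_ae
    (Filter.Eventually.of_forall fun t => (stdPDF_pos t).le) integrable_stdPDF.integrableOn]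
  simp [Function.support_eq_univ (fun t => (stdPDF_pos t).ne')]

theorem stdCDF_zero : stdCDF 0 = 1 / 2 := by
  have hsymm : stdCDF 0 = ∫ t in Ioi 0, stdPDF t := by
    rw [stdCDF]
    simpa [stdPDF_neg] using integral_comp_neg_Iic 0 stdPDF
  have htotal : stdCDF 0 + ∫ t in Ioi 0, stdPDF t = 1 := by
    rw [stdCDF, intervalIntegral.integral_Iic_add_Ioi integrable_stdPDF.integrableOn
      integrable_stdPDF.integrableOn, integral_stdPDF]
  linarith

theorem half_add_mul_stdPDF_le_stdCDF {x : ℝ} (hx : 0 ≤ x) :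
    1 / 2 + x * stdPDF x ≤ stdCDF x := by
  have hincr : stdCDF x - stdCDF 0 = ∫ t in (0)..x, stdPDF t :=
    intervalIntegral.integral_Iic_sub_Iic integrable_stdPDF.integrableOn
      integrable_stdPDF.integrableOn
  have hmono : ∫ _ in (0)..x, stdPDF x ≤ ∫ t in (0)..x, stdPDF t :=
    intervalIntegral.integral_mono_on hx intervalIntegrable_const
      (continuous_stdPDF.intervalIntegrable 0 x)
      fun t ht => stdPDF_antitoneOn ht.1 (hx : x ∈ Ici 0) ht.2
  simp only [intervalIntegral.integral_const, sub_zero, smul_eq_mul] at hmono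
  linarith [stdCDF_zero]

noncomputable def invMillsRatio (x : ℝ) : ℝ := stdPDF x / stdCDF x

theorem hasDerivAt_invMillsRatio (x : ℝ) :
    HasDerivAt invMillsRatio (-x * invMillsRatio x - invMillsRatio x ^ 2) x := by
  have hP := (stdCDF_pos x).ne'
  refine ((hasDerivAt_stdPDF x).div (hasDerivAt_stdCDF x) hP).congr_deriv ?_
  unfold invMillsRatio
  field_simp

theorem Q_eq : Q = fun x => x ^ 2 + x * invMillsRatio x := by
  funext x
  rw [Q, invMillsRatio, mul_div_assoc]

theorem hasDerivAt_Q (x : ℝ) :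
    HasDerivAt Q (2 * x + (1 - x ^ 2) * invMillsRatio x - x * invMillsRatio x ^ 2) x := by
  rw [Q_eq]
  refine ((hasDerivAt_pow 2 x).add
    ((hasDerivAt_id x).mul (hasDerivAt_invMillsRatio x))).congr_deriv ?_
  norm_num
  ring

theorem K_div_stdCDF_pow (x : ℝ) :
    K x / stdCDF x ^ 3 = 2 + x ^ 3 * invMillsRatio x + 3 * x ^ 2 * invMillsRatio x ^ 2
      - 3 * x * invMillsRatio x - 2 * invMillsRatio x ^ 2 + 2 * x * invMillsRatio x ^ 3 := by
  have hP := (stdCDF_pos x).ne'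
  unfold K invMillsRatio
  field_simp
  ring

theorem hasDerivAt_deriv_Q (x : ℝ) : HasDerivAt (deriv Q) (K x / stdCDF x ^ 3) x := by
  have hderiv :
      deriv Q = fun x => 2 * x + (1 - x ^ 2) * invMillsRatio x - x * invMillsRatio x ^ 2 :=
    funext fun x => (hasDerivAt_Q x).deriv
  have hr := hasDerivAt_invMillsRatio x
  rw [hderiv]
  refine ((((hasDerivAt_id x).const_mul 2).add (((hasDerivAt_const x 1).sub
    (hasDerivAt_pow 2 x)).mul hr)).sub ((hasDerivAt_id x).mul (hr.pow 2))).congr_deriv ?_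
  rw [K_div_stdCDF_pow]
  simp only [id, Pi.sub_apply, Pi.pow_apply]
  ring

theorem K_pos {x : ℝ} (hx : 0 < x) : 0 < K x := by
  set p := stdPDF x
  set P := stdCDF x
  have hp : 0 < p := stdPDF_pos x
  have hP : 0 < P := stdCDF_pos x
  have hpP : 1 / 2 + x * p ≤ P := half_add_mul_stdPDF_le_stdCDF hx.le
  have hp_le : p ≤ 1 / 2 := stdPDF_le_half x
  have hxp : 0 < x * p := mul_pos hx hp
  -- `G = (P - 1/2 - xp)(2P + 1 - xp) + 2(xp)² + xp/2 + (1/2 - 2p²)`, a sum of positive terms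
  have hG : 0 < 2 * P ^ 2 - 2 * p ^ 2 - 3 * (x * p) * P + 3 * (x * p) ^ 2 := by
    nlinarith [mul_nonneg (sub_nonneg.2 hpP) (by linarith : 0 ≤ 2 * P + 1 - x * p)]
  have hK : K x = P * (2 * P ^ 2 - 2 * p ^ 2 - 3 * (x * p) * P + 3 * (x * p) ^ 2)
      + 2 * x * p ^ 3 + x ^ 3 * P ^ 2 * p := by
    unfold K; ring
  rw [hK]
  exact add_pos (add_pos (mul_pos hP hG) (by positivity)) (by positivity)

/-- `Q(x) = x² + x·φ(x)/Φ(x)` is strictly convex on `(0, ∞)`,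
with `Q''(x) = K(x)/Φ(x)³` and `K(x) > 0` for `x > 0`. -/
theorem Q_strictConvex :
    (∀ x : ℝ, 0 < x → deriv (deriv Q) x = K x / (stdCDF x) ^ 3 ∧ 0 < K x) ∧
      StrictConvexOn ℝ (Set.Ioi 0) Q := by
  have hQ'' (x : ℝ) : deriv (deriv Q) x = K x / stdCDF x ^ 3 := (hasDerivAt_deriv_Q x).deriv
  refine ⟨fun x hx => ⟨hQ'' x, K_pos hx⟩, strictConvexOn_of_deriv2_pos (convex_Ioi 0) ?_ ?_⟩
  · exact (continuous_iff_continuousAt.2 fun x => (hasDerivAt_Q x).continuousAt).continuousOn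
  · intro x hx
    rw [interior_Ioi] at hx
    show 0 < deriv (deriv Q) x
    rw [hQ'']
    exact div_pos (K_pos hx) (pow_pos (stdCDF_pos x) 3)
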